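/- arXiv:0708.2247 — 2 statements merged into one kernel-verified Lean document; each statement's English description precedes it below -/
import Mathlib

section
/- Let V be a real vector space with a symmetric bilinear form of signature (1,k), let F ∈ V with F·F > 0, let D, c ∈ V, and let r > 0 be a real number. Suppose (c − rD)·F = 0 and ch₂ ≤ (c·c)/(2r). Then the quantity Re := −ch₂ + D·c − r(D·D/2 − F·F/2) satisfies Re ≥ −(1/(2r))·(rD − c)·(rD − c) + r·(F·F)/2 > 0. -/
/-- Key inequality of Corollary 2.7: if `(c − rD)·F = 0` and `ch₂ ≤ c²/(2r)` then
`Re = −ch₂ + D·c − r(D²/2 − F²/2) ≥ −(1/(2r))(rD−c)² + r F²/2 > 0`. -/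
theorem stmt_5 (k : ℕ) (B : (ℝ × (Fin k → ℝ)) → (ℝ × (Fin k → ℝ)) → ℝ)
    (hB : ∀ x y, B x y = x.1 * y.1 - ∑ i, x.2 i * y.2 i)
    (D c F : ℝ × (Fin k → ℝ)) (r ch2 : ℝ) (hr : 0 < r)
    (hF : 0 < B F F) (horth : B (c - r • D) F = 0)
    (hBG : ch2 ≤ B c c / (2*r)) :
    -ch2 + B D c - r * (B D D / 2 - B F F / 2)
      ≥ -(1/(2*r)) * B (r • D - c) (r • D - c) + r * (B F F) / 2 ∧
    0 < -ch2 + B D c - r * (B D D / 2 - B F F / 2) := by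
  set v : ℝ × (Fin k → ℝ) := r • D - c with hv
  -- component facts
  have hv1 : v.1 = r * D.1 - c.1 := rfl
  have hv2 : ∀ i, v.2 i = r * D.2 i - c.2 i := fun i => rfl
  -- orthogonality: v.1 * F.1 = ∑ v.2 i * F.2 i
  have horth' : v.1 * F.1 = ∑ i, v.2 i * F.2 i := by
    have h := horth
    rw [hB] at h
    have h1 : (c - r • D).1 = -v.1 := by simp [hv1]
    have h2 : ∀ i, (c - r • D).2 i = -v.2 i := by intro i; simp [hv2]
    rw [h1] at h
    have h3 : (∑ i, (c - r • D).2 i * F.2 i) = ∑ i, -(v.2 i * F.2 i) := by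
      apply Finset.sum_congr rfl; intro i _; rw [h2]; ring
    rw [h3, Finset.sum_neg_distrib] at h
    linarith
  -- positivity of F: F.1^2 > ∑ (F.2 i)^2
  have hF' : (∑ i, F.2 i * F.2 i) < F.1 * F.1 := by
    have := hF; rw [hB] at this; linarith
  have hFsum : (0:ℝ) ≤ ∑ i, F.2 i * F.2 i :=
    Finset.sum_nonneg fun i _ => mul_self_nonneg _
  have hF1 : 0 < F.1 * F.1 := lt_of_le_of_lt hFsum hF'
  -- Hodge index: B v v ≤ 0
  have hodge : B v v ≤ 0 := by
    rw [hB]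
    have cs : (∑ i, v.2 i * F.2 i)^2 ≤ (∑ i, v.2 i * v.2 i) * (∑ i, F.2 i * F.2 i) := by
      have := Finset.sum_mul_sq_le_sq_mul_sq Finset.univ v.2 F.2
      simpa [sq] using this
    have key : v.1 * v.1 * (F.1 * F.1) ≤ (∑ i, v.2 i * v.2 i) * (F.1 * F.1) := by
      have h1 : v.1 * v.1 * (F.1 * F.1) = (v.1 * F.1)^2 := by ring
      rw [h1, horth']
      calc (∑ i, v.2 i * F.2 i)^2 ≤ (∑ i, v.2 i * v.2 i) * (∑ i, F.2 i * F.2 i) := cs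
        _ ≤ (∑ i, v.2 i * v.2 i) * (F.1 * F.1) := by
            apply mul_le_mul_of_nonneg_left (le_of_lt hF')
            exact Finset.sum_nonneg fun i _ => mul_self_nonneg _
    have := le_of_mul_le_mul_right (by linarith : v.1 * v.1 * (F.1*F.1) ≤ (∑ i, v.2 i * v.2 i) * (F.1*F.1)) hF1
    linarith
  -- expansion of B v v
  have expand : B v v = r^2 * B D D - 2*r*B D c + B c c := by
    rw [hB, hB, hB, hB]
    have h : (∑ i, v.2 i * v.2 i)
        = r^2 * (∑ i, D.2 i * D.2 i) - 2*r*(∑ i, D.2 i * c.2 i) + ∑ i, c.2 i * c.2 i := by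
      rw [Finset.mul_sum, Finset.mul_sum, ← Finset.sum_sub_distrib, ← Finset.sum_add_distrib]
      apply Finset.sum_congr rfl
      intro i _
      rw [hv2]; ring
    rw [h, hv1]; ring
  have hge : -ch2 + B D c - r * (B D D / 2 - B F F / 2)
      ≥ -(1/(2*r)) * B v v + r * (B F F) / 2 := by
    have h1 : -(1/(2*r)) * B v v = -r/2 * B D D + B D c - B c c/(2*r) := by
      rw [expand]; field_simp; ring
    have h2 : -ch2 ≥ -(B c c / (2*r)) := by linarith
    rw [h1]
    have : -(B c c/(2*r)) + B D c - r * B D D/2 + r * B F F/2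
        ≤ -ch2 + B D c - r * (B D D / 2 - B F F / 2) := by linarith
    linarith
  refine ⟨hge, ?_⟩
  have hpos : 0 < -(1/(2*r)) * B v v + r * (B F F) / 2 := by
    have h1 : 0 ≤ -(1/(2*r)) * B v v := by
      have hp : (0:ℝ) < 1/(2*r) := by positivity
      nlinarith [hodge]
    have h2 : 0 < r * (B F F) / 2 := by positivity
    linarith
  linarith
end

section
/- Let g ≥ 2 and H² = 2g − 2. The rank-three wall values of t on a K3 surface, determined by setting 0 = −H²/24 + (3/2)t²H² + c_g where c_g = −1/3 if g ≡ 0 mod 3, c_g = 0 if g ≡ 1 mod 3, and c_g = 1/3 if g ≡ 2 mod 3, are given by t² = (H²/24 − c_g)/((3/2)H²) = 1/36 − c_g/(3(g−1)). In particular all rank-three walls satisfy t ≤ 1/6 + O(1/g), and the number of rank-one walls √((g+3)/4 − d)/(g−1)) exceeding the largest rank-three wall is ⌈2(g+3)/9⌉. -/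
lemma count_lt_card (N : ℕ) (P : ℕ → Prop) (h : ∀ d, P d ↔ d < N) :
    Nat.card {d : ℕ // P d} = N := by
  rw [Nat.card_congr ((Equiv.subtypeEquivRight h).trans (Fin.equivSubtype).symm)]
  simp

lemma wall_iff (g : ℕ) (hg : 2 ≤ g) (A : ℝ) (hA : 0 ≤ A) (a : ℕ)
    (hT : (a:ℝ)/9 = ((g:ℝ)+3)/4 - A*((g:ℝ)-1)) (d : ℕ) :
    (Real.sqrt A < Real.sqrt ((((g:ℝ)+3)/4 - (d:ℝ))/((g:ℝ)-1)) ↔ 9*d < a) := by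
  have hg2 : (2:ℝ) ≤ (g:ℝ) := by exact_mod_cast hg
  have hgpos : (0:ℝ) < (g:ℝ) - 1 := by linarith
  rw [Real.sqrt_lt_sqrt_iff hA, lt_div_iff₀ hgpos]
  constructor
  · intro h
    have h9 : ((9*d:ℕ):ℝ) < ((a:ℕ):ℝ) := by push_cast; nlinarith
    exact_mod_cast h9
  · intro h
    have h9 : ((9*d:ℕ):ℝ) < ((a:ℕ):ℝ) := by exact_mod_cast h
    push_cast at h9
    nlinarith

/-- Rank-three wall values on a K3 surface of genus `g` (`H² = 2g−2`): with
`c_g = −1/3, 0, 1/3` according to `g mod 3`, the wall equation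
`0 = −H²/24 + (3/2)t²H² + c_g` holds iff `t² = 1/36 − c_g/(3(g−1))`; and the number
of rank-one walls `√(((g+3)/4 − d)/(g−1))` exceeding the largest rank-three wall
is `⌈2(g+3)/9⌉`. -/
theorem stmt_15 (g : ℕ) (hg : 2 ≤ g) (H2 cg : ℝ) (hH2 : H2 = 2*(g:ℝ) - 2)
    (hcg : cg = if g % 3 = 0 then -(1/3 : ℝ) else if g % 3 = 1 then 0 else 1/3) :
    (∀ t : ℝ, (-H2/24 + (3/2)*t^2*H2 + cg = 0 ↔
      t^2 = 1/36 - cg/(3*((g:ℝ) - 1)))) ∧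
    Nat.card {d : ℕ // Real.sqrt (1/36 - cg/(3*((g:ℝ) - 1)))
        < Real.sqrt ((((g:ℝ) + 3)/4 - (d:ℝ))/((g:ℝ) - 1)) }
      = ⌈2*((g:ℝ) + 3)/9⌉₊ := by
  have hg2 : (2:ℝ) ≤ (g:ℝ) := by exact_mod_cast hg
  have hgpos : (0:ℝ) < (g:ℝ) - 1 := by linarith
  have hne : (g:ℝ) - 1 ≠ 0 := ne_of_gt hgpos
  constructor
  · intro t
    subst hH2
    constructor
    · intro h
      field_simp
      linear_combination (36:ℝ) * h
    · intro h
      field_simp at h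
      linear_combination h/36
  · -- counting part
    have hceil : ∀ d : ℕ, (d < ⌈2*((g:ℝ) + 3)/9⌉₊ ↔ 9*d < 2*g+6) := by
      intro d
      rw [Nat.lt_ceil, lt_div_iff₀ (by norm_num : (0:ℝ) < 9)]
      constructor
      · intro h
        have h9 : ((9*d:ℕ):ℝ) < ((2*g+6:ℕ):ℝ) := by push_cast; linarith
        exact_mod_cast h9
      · intro h
        have h9 : ((9*d:ℕ):ℝ) < ((2*g+6:ℕ):ℝ) := by exact_mod_cast h
        push_cast at h9
        linarith
    rcases (show g % 3 = 0 ∨ g % 3 = 1 ∨ g % 3 = 2 by omega) with h3 | h3 | h3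
    · -- cg = -1/3, a = 2g+6
      rw [hcg, if_pos h3]
      apply count_lt_card
      intro d
      have hA : (0:ℝ) ≤ 1/36 - -(1/3)/(3*((g:ℝ)-1)) := by
        have h1 : (0:ℝ) ≤ (1/3)/(3*((g:ℝ)-1)) :=
          div_nonneg (by norm_num) (by linarith)
        have h2 : -(1/3:ℝ)/(3*((g:ℝ)-1)) = -((1/3)/(3*((g:ℝ)-1))) := by ring
        rw [h2]; linarith
      rw [wall_iff g hg _ hA (2*g+6) (by push_cast; field_simp; ring) d]
      have := hceil d
      omega
    · -- cg = 0, a = 2g+7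
      rw [hcg, if_neg (by omega), if_pos h3]
      apply count_lt_card
      intro d
      have hA : (0:ℝ) ≤ 1/36 - 0/(3*((g:ℝ)-1)) := by norm_num
      rw [wall_iff g hg _ hA (2*g+7) (by push_cast; field_simp; ring) d]
      have := hceil d
      omega
    · rw [hcg, if_neg (by omega), if_neg (by omega)]
      rcases (show g = 2 ∨ 5 ≤ g by omega) with rfl | hg5
      · -- g = 2 : A < 0
        apply count_lt_card
        intro d
        have hA0 : Real.sqrt (1/36 - (1/3)/(3*(((2:ℕ):ℝ)-1))) = 0 := by
          rw [Real.sqrt_eq_zero']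
          norm_num
        rw [hA0, Real.sqrt_pos]
        have h1 : ((((2:ℕ):ℝ)+3)/4 - (d:ℝ))/(((2:ℕ):ℝ)-1) = 5/4 - d := by
          norm_num
        rw [h1]
        have h2 : (0:ℝ) < 5/4 - (d:ℝ) ↔ (d:ℝ) < 5/4 := by constructor <;> intro <;> linarith
        rw [h2]
        have hceil2 := hceil d
        constructor
        · intro h
          have : d < 2 := by exact_mod_cast (by nlinarith : (d:ℝ) < 2)
          omega
        · intro h
          have hd : d < 2 := by omega
          have : (d:ℝ) ≤ 1 := by exact_mod_cast Nat.lt_succ_iff.mp hd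
          linarith
      · -- g ≥ 5 : a = 2g+8
        have hg5' : (5:ℝ) ≤ (g:ℝ) := by exact_mod_cast hg5
        apply count_lt_card
        intro d
        have hA : (0:ℝ) ≤ 1/36 - (1/3)/(3*((g:ℝ)-1)) := by
          have h1 : (1/3:ℝ)/(3*((g:ℝ)-1)) ≤ 1/36 := by
            rw [div_le_iff₀ (by linarith)]
            linarith
          linarith
        rw [wall_iff g hg _ hA (2*g+8) (by push_cast; field_simp; ring) d]
        have := hceil d
        omega
end
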